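/- For every integer d ≥ 2 there exists a finite hypothesis class H with Littlestone dimension Ldim(H) = d and list replicability number List(H) = 2; such a class is given by the collection of thresholds over a linearly ordered domain of 2^d points. -/

import Mathlib

open scoped ENNReal

namespace Replicability

variable {X : Type*}

/-- A labeled sample of size `n`: `n` pairs of a domain point and a boolean label
(`true` encodes `+1` and `false` encodes `-1`). -/
abbrev Sample (X : Type*) (n : ℕ) := Fin n → X × Bool

/-- A (possibly randomized) learning rule: for every sample size `n` it maps a sample of
size `n` to a probability distribution over output predictors `X → Bool`. -/
abbrev LearningRule (X : Type*) := (n : ℕ) → Sample X n → PMF (X → Bool)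

/-- The population loss `L_D(h) = Pr_{(x,y) ~ D}[h x ≠ y]` of a predictor `h` with
respect to a distribution `D` over labeled examples. -/
noncomputable def popLoss (D : PMF (X × Bool)) (h : X → Bool) : ℝ≥0∞ :=
  D.toOuterMeasure {p | h p.1 ≠ p.2}

/-- `D` is realizable by the hypothesis class `H`: `inf_{h ∈ H} L_D(h) = 0`. -/
def Realizable (H : Set (X → Bool)) (D : PMF (X × Bool)) : Prop :=
  ∀ ε : ℝ≥0∞, 0 < ε → ∃ h ∈ H, popLoss D h < ε

/-- The probability that, for an i.i.d. sample `S ~ D^n`, the (random) output of the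
learning rule `A` on `S` lands in the set `E` of predictors. -/
noncomputable def outProb (D : PMF (X × Bool)) {n : ℕ}
    (A : Sample X n → PMF (X → Bool)) (E : Set (X → Bool)) : ℝ≥0∞ :=
  ∑' S : Sample X n, (∏ i, D (S i)) * (A S).toOuterMeasure E

/-- `A` is an `(ε, ρ)`-globally stable learner for `H`: there is a sample size `n` such
that for every `H`-realizable `D` some predictor `h` with `L_D(h) ≤ ε` is output with
probability at least `ρ`. -/
def IsGSLearner (H : Set (X → Bool)) (A : LearningRule X) (ε ρ : ℝ) : Prop :=
  ∃ n : ℕ, ∀ D : PMF (X × Bool), Realizable H D →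
    ∃ h : X → Bool, popLoss D h ≤ ENNReal.ofReal ε ∧
      ENNReal.ofReal ρ ≤ outProb D (A n) {h}

/-- The global stability parameter `ρ(H)`. -/
noncomputable def globalStability (H : Set (X → Bool)) : ℝ :=
  sSup {ρ : ℝ | ρ ∈ Set.Icc (0 : ℝ) 1 ∧
    ∀ ε : ℝ, 0 < ε → ∃ A : LearningRule X, IsGSLearner H A ε ρ}

/-- The global stability parameter `ρ_F(H)` of `H` with respect to the output class `F`:
only learners all of whose outputs lie in `F` are considered. -/
noncomputable def globalStabilityIn (F H : Set (X → Bool)) : ℝ :=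
  sSup {ρ : ℝ | ρ ∈ Set.Icc (0 : ℝ) 1 ∧
    ∀ ε : ℝ, 0 < ε → ∃ A : LearningRule X,
      (∀ n S, (A n S).support ⊆ F) ∧ IsGSLearner H A ε ρ}

/-- `A` is an `(ε, L)`-list replicable learner for `H`: for every `δ > 0` there is a
sample size `n` such that for every `H`-realizable `D` there are predictors
`h_1, …, h_L`, each of population loss at most `ε`, such that the output of `A` is one
of them with probability at least `1 - δ`. -/
def IsListLearner (H : Set (X → Bool)) (A : LearningRule X) (ε : ℝ) (L : ℕ) : Prop :=
  ∀ δ : ℝ, 0 < δ → ∃ n : ℕ, ∀ D : PMF (X × Bool), Realizable H D →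
    ∃ hs : Fin L → (X → Bool),
      (∀ ℓ, popLoss D (hs ℓ) ≤ ENNReal.ofReal ε) ∧
      ENNReal.ofReal (1 - δ) ≤ outProb D (A n) (Set.range hs)

/-- The list replicability number `List(H)` (`⊤` if no finite list size works). -/
noncomputable def listNumber (H : Set (X → Bool)) : ℕ∞ :=
  sInf {L : ℕ∞ | ∃ l : ℕ, L = l ∧
    ∀ ε : ℝ, 0 < ε → ∃ A : LearningRule X, IsListLearner H A ε l}

/-- `A` is a proper learning rule for `H`: every output lies in `H`. -/
def IsProper (H : Set (X → Bool)) (A : LearningRule X) : Prop :=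
  ∀ n S, ((A n S).support : Set (X → Bool)) ⊆ H

/-- `A` is a proper `(ε, L)`-list replicable learner for `H`: a proper learning rule
whose lists consist of hypotheses from `H`. -/
def IsProperListLearner (H : Set (X → Bool)) (A : LearningRule X) (ε : ℝ) (L : ℕ) : Prop :=
  IsProper H A ∧
  ∀ δ : ℝ, 0 < δ → ∃ n : ℕ, ∀ D : PMF (X × Bool), Realizable H D →
    ∃ hs : Fin L → (X → Bool),
      (∀ ℓ, hs ℓ ∈ H) ∧
      (∀ ℓ, popLoss D (hs ℓ) ≤ ENNReal.ofReal ε) ∧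
      ENNReal.ofReal (1 - δ) ≤ outProb D (A n) (Set.range hs)

/-- The proper list replicability number `List_p(H)` (`⊤` if no finite list size works). -/
noncomputable def properListNumber (H : Set (X → Bool)) : ℕ∞ :=
  sInf {L : ℕ∞ | ∃ l : ℕ, L = l ∧
    ∀ ε : ℝ, 0 < ε → ∃ A : LearningRule X, IsProperListLearner H A ε l}

/-- `H` shatters the finite set `s`. -/
def Shatters (H : Set (X → Bool)) (s : Finset X) : Prop :=
  ∀ σ : X → Bool, ∃ h ∈ H, ∀ x ∈ s, h x = σ x

/-- The VC dimension of `H`, as an extended natural number. -/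
noncomputable def VCDim (H : Set (X → Bool)) : ℕ∞ :=
  sSup {d : ℕ∞ | ∃ s : Finset X, Shatters H s ∧ d = s.card}

/-- `H` shatters a complete binary mistake tree of depth `d`: there is an assignment of
a point to every binary string (only strings of length `< d` matter) such that every
branch `σ ∈ Bool^d` is realized by some `h ∈ H`. -/
def LdimGe (H : Set (X → Bool)) (d : ℕ) : Prop :=
  ∃ tree : List Bool → X, ∀ σ : Fin d → Bool, ∃ h ∈ H,
    ∀ j : Fin d, h (tree (List.ofFn fun i : Fin j => σ (Fin.castLE j.isLt.le i))) = σ j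

/-- The Littlestone dimension of `H`, as an extended natural number. -/
noncomputable def Ldim (H : Set (X → Bool)) : ℕ∞ :=
  sSup {d : ℕ∞ | ∃ k : ℕ, d = k ∧ LdimGe H k}

/-- The projection of `H` to the finite set `s` contains a hollow star centered at some
pattern `f`: `f` is not realized by `H` on `s`, but each of the `|s|` patterns obtained
from `f` by flipping one coordinate is. -/
def HasHollowStar (H : Set (X → Bool)) (s : Finset X) : Prop :=
  ∃ f : X → Bool,
    (¬ ∃ h ∈ H, ∀ x ∈ s, h x = f x) ∧
    ∀ x₀ ∈ s, ∃ h ∈ H, h x₀ = !(f x₀) ∧ ∀ x ∈ s, x ≠ x₀ → h x = f x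

/-- The hollow star number of `H`, as an extended natural number. -/
noncomputable def HSdim (H : Set (X → Bool)) : ℕ∞ :=
  sSup {d : ℕ∞ | ∃ s : Finset X, HasHollowStar H s ∧ d = s.card}

/-- The class of `t` thresholds `τ_i : [t-1] → {±1}`, `i ∈ [t]`, where (identifying
`[t-1]` with `Fin (t-1)` and `[t]` with `Fin t` via `x ↦ x + 1`) `τ_i x = +1` iff `x ≥ i`. -/
def thresholdClass (t : ℕ) : Set (Fin (t - 1) → Bool) :=
  {h | ∃ i : Fin t, h = fun x : Fin (t - 1) => decide ((i : ℕ) ≤ (x : ℕ))}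

/-- The class of `s` singletons over `[s]`: `h_i x = +1` iff `x = i`. -/
def singletonClass (s : ℕ) : Set (Fin s → Bool) :=
  {h | ∃ i : Fin s, h = fun x => decide (x = i)}

/-- The empirical loss of `h` on the sample `S`. -/
noncomputable def empLoss {n : ℕ} (S : Sample X n) (h : X → Bool) : ℝ :=
  (Finset.univ.filter fun i => h (S i).1 ≠ (S i).2).card / n

/-- The sample `S` is consistent with `H`. -/
def Consistent (H : Set (X → Bool)) {n : ℕ} (S : Sample X n) : Prop :=
  ∃ h ∈ H, ∀ i, h (S i).1 = (S i).2

/-- `A` is an `ε'`-empirical learner for `H`: for all large enough sample sizes, on every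
sample consistent with `H` and every internal randomness, the output has empirical loss
at most `ε'`. -/
def IsEmpiricalLearner (H : Set (X → Bool)) (A : LearningRule X) (ε' : ℝ) : Prop :=
  ∃ n₀ : ℕ, ∀ n > n₀, ∀ S : Sample X n, Consistent H S →
    ∀ f ∈ (A n S).support, empLoss S f ≤ ε'

/-- An instability witness of size `k` for `H` with respect to the output class `F`
(`true` encodes the label `+1` and `false` the label `-1`). -/
def IsInstabilityWitness (H F : Set (X → Bool)) (k : ℕ)
    (W : Fin k × Bool → X × Bool) : Prop :=
  (∃ xy : X × Bool, ∀ σ : Fin k → Bool, ∃ h ∈ H, h xy.1 = xy.2 ∧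
      ∀ j : Fin k, W (j, σ j) ≠ xy ∧ h (W (j, σ j)).1 = (W (j, σ j)).2) ∧
  (∃ F' : Fin (k + 1) → Set (X → Bool),
      (∀ i, F' i ⊆ F) ∧
      (∀ f ∈ F, ∃! i, f ∈ F' i) ∧
      (∀ j : Fin k, ∀ f₀ ∈ F' 0, f₀ (W (j, false)).1 ≠ (W (j, false)).2) ∧
      (∀ j : Fin k, ∀ f ∈ F' j.succ, f (W (j, true)).1 ≠ (W (j, true)).2))

/-- The total variation distance between two distributions over a countable set. -/
noncomputable def tvDist {α : Type*} (p q : PMF α) : ℝ :=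
  (∑' a, |(p a).toReal - (q a).toReal|) / 2

/-!
A mistake tree of depth `k` shattered by `H` needs `2 ^ k` distinct hypotheses, one per branch,
while binary search shows that the `t` thresholds shatter a tree of depth `⌊log₂ t⌋`.

One list element does not suffice once `h₁, h₂ ∈ H` disagree at `x₁` and agree at `x₂`: along
the mixtures of point masses leading from `(x₁, h₁ x₁)` via `(x₂, h₁ x₂)` to `(x₁, h₂ x₁)` every
distribution is realizable, so the probability that the output labels `x₁` like `h₁` never lies
in `(1/3, 2/3)`; but it depends continuously on the mixture, starts `≥ 2/3` and ends `≤ 1/3`.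

Two elements suffice for thresholds: the margin `G j = P(y = +, x < j) - P(y = -, x ≥ j)` is
monotone in `j`, vanishes at a perfect threshold, and `|G j|` is the loss of `threshold j`.
The score `v = ∑_{j < t} ramp ε (G j)` has the property that `threshold (t - 1 - q)` is `ε`-good
for every integer `q` with `|q - v| < 1`. The learner rounds the empirical score to the nearest
integer; by Chebyshev's inequality the empirical score is within `1/4` of `v` with high
probability, and then only the two values `⌊v + 1/4⌋` and `⌊v + 3/4⌋` can occur.
-/

end Replicability

namespace PMF

variable {α : Type*}

theorem sum_toReal [Fintype α] (p : PMF α) : ∑ a, (p a).toReal = 1 := by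
  have h := p.tsum_coe
  rw [tsum_fintype] at h
  rw [← ENNReal.toReal_sum fun a _ => p.apply_ne_top a, h, ENNReal.toReal_one]

theorem sum_prod_apply [Fintype α] (p : PMF α) (n : ℕ) :
    ∑ S : Fin n → α, ∏ i, p (S i) = 1 := by
  rw [← Fintype.prod_sum fun _ a => p a, ← tsum_fintype (L := .unconditional _), p.tsum_coe,
    Finset.prod_const_one]

theorem sum_prod_toReal [Fintype α] (p : PMF α) (n : ℕ) :
    ∑ S : Fin n → α, ∏ i, (p (S i)).toReal = 1 := by
  rw [← Fintype.prod_sum fun _ a => (p a).toReal]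
  simp [sum_toReal]

theorem toOuterMeasure_add_compl (p : PMF α) (E : Set α) :
    p.toOuterMeasure E + p.toOuterMeasure Eᶜ = 1 := by
  rw [toOuterMeasure_apply, toOuterMeasure_apply, ← ENNReal.tsum_add, ← p.tsum_coe]
  exact tsum_congr fun a => congr_fun (Set.indicator_self_add_compl E p) a

theorem toOuterMeasure_le_one (p : PMF α) (E : Set α) : p.toOuterMeasure E ≤ 1 :=
  (p.toOuterMeasure_add_compl E).le.trans' le_self_add

noncomputable def mix [Fintype α] (p q : PMF α) (u : unitInterval) : PMF α :=
  ofFintype (fun a => ENNReal.ofReal ((1 - u) * (p a).toReal + u * (q a).toReal)) (by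
    rw [← ENNReal.ofReal_sum_of_nonneg fun a _ => add_nonneg
      (mul_nonneg (unitInterval.one_minus_nonneg u) ENNReal.toReal_nonneg)
      (mul_nonneg u.2.1 ENNReal.toReal_nonneg)]
    simp [Finset.sum_add_distrib, ← Finset.mul_sum, sum_toReal])

variable [Fintype α] (p q : PMF α)

theorem mix_apply_toReal (u : unitInterval) (a : α) :
    (mix p q u a).toReal = (1 - u) * (p a).toReal + u * (q a).toReal := by
  rw [mix, ofFintype_apply, ENNReal.toReal_ofReal (add_nonneg
    (mul_nonneg (unitInterval.one_minus_nonneg u) ENNReal.toReal_nonneg)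
    (mul_nonneg u.2.1 ENNReal.toReal_nonneg))]

@[simp]
theorem mix_zero : mix p q 0 = p :=
  PMF.ext fun a => by simp [mix, ENNReal.ofReal_toReal (p.apply_ne_top a)]

@[simp]
theorem mix_one : mix p q 1 = q :=
  PMF.ext fun a => by simp [mix, ENNReal.ofReal_toReal (q.apply_ne_top a)]

theorem support_mix_subset (u : unitInterval) : (mix p q u).support ⊆ p.support ∪ q.support := by
  intro a ha
  by_contra hpq
  simp only [Set.mem_union, mem_support_iff, not_or, not_not] at hpq
  exact ha (by simp [mix, hpq.1, hpq.2])

theorem sum_prod_mul_sq_sum_le {Z : α → ℝ} (hmean : ∑ a, (p a).toReal * Z a = 0) {c : ℝ}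
    (hc : ∀ a, Z a ^ 2 ≤ c) (n : ℕ) :
    ∑ S : Fin n → α, (∏ i, (p (S i)).toReal) * (∑ i, Z (S i)) ^ 2 ≤ n * c := by
  induction n with
  | zero => simp
  | succ n ih =>
    rw [← (Fin.consEquiv fun _ => α).sum_comp, Fintype.sum_prod_type]
    simp only [Fin.consEquiv_apply, Fin.prod_univ_succ, Fin.sum_univ_succ, Fin.cons_zero,
      Fin.cons_succ]
    have hsq : ∑ a, (p a).toReal * Z a ^ 2 ≤ c := by
      calc ∑ a, (p a).toReal * Z a ^ 2 ≤ ∑ a, (p a).toReal * c :=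
            Finset.sum_le_sum fun a _ => mul_le_mul_of_nonneg_left (hc a) ENNReal.toReal_nonneg
        _ = c := by rw [← Finset.sum_mul, p.sum_toReal, one_mul]
    calc ∑ a, ∑ S : Fin n → α,
          (p a).toReal * (∏ i, (p (S i)).toReal) * (Z a + ∑ i, Z (S i)) ^ 2
        = (∑ a, (p a).toReal * Z a ^ 2) * (∑ S : Fin n → α, ∏ i, (p (S i)).toReal)
          + (∑ a, 2 * (p a).toReal * Z a) *
            (∑ S : Fin n → α, (∏ i, (p (S i)).toReal) * ∑ i, Z (S i))
          + (∑ a, (p a).toReal) *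
            ∑ S : Fin n → α, (∏ i, (p (S i)).toReal) * (∑ i, Z (S i)) ^ 2 := by
          simp only [Finset.sum_mul_sum, ← Finset.sum_add_distrib]
          exact Finset.sum_congr rfl fun a _ => Finset.sum_congr rfl fun S _ => by ring
      _ ≤ c * 1 + 0 * _ + 1 * (n * c) := by
          rw [p.sum_prod_toReal, p.sum_toReal]
          simp only [mul_assoc, ← Finset.mul_sum, hmean, mul_zero]
          gcongr
      _ = (n + 1 : ℕ) * c := by push_cast; ring

theorem abs_sum_toReal_mul_le {f : α → ℝ} (hf : ∀ a, |f a| ≤ 1) :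
    |∑ a, (p a).toReal * f a| ≤ 1 :=
  calc |∑ a, (p a).toReal * f a| ≤ ∑ a, (p a).toReal * 1 := by
        refine (Finset.abs_sum_le_sum_abs _ _).trans (Finset.sum_le_sum fun a _ => ?_)
        rw [abs_mul, abs_of_nonneg ENNReal.toReal_nonneg]
        exact mul_le_mul_of_nonneg_left (hf a) ENNReal.toReal_nonneg
    _ = 1 := by rw [← Finset.sum_mul, p.sum_toReal, one_mul]

/-- Chebyshev's inequality for the sample mean; `f - mean` has variance at most `4`. -/
theorem sum_prod_filter_lt_abs_sub_le {f : α → ℝ} (hf : ∀ a, |f a| ≤ 1) {n : ℕ} (hn : 0 < n)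
    {γ : ℝ} (hγ : 0 < γ) :
    ∑ S : Fin n → α with γ < |(∑ i, f (S i)) / n - ∑ a, (p a).toReal * f a|,
      ∏ i, (p (S i)).toReal ≤ 4 / (n * γ ^ 2) := by
  set μ := ∑ a, (p a).toReal * f a
  have hn' : (0 : ℝ) < n := Nat.cast_pos.2 hn
  have hW : ∀ S : Fin n → α, 0 ≤ ∏ i, (p (S i)).toReal := fun S =>
    Finset.prod_nonneg fun _ _ => ENNReal.toReal_nonneg
  have hmean : ∑ a, (p a).toReal * (f a - μ) = 0 := by
    simp only [mul_sub, Finset.sum_sub_distrib, ← Finset.sum_mul, p.sum_toReal, one_mul, μ,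
      sub_self]
  have hc : ∀ a, (f a - μ) ^ 2 ≤ 4 := fun a => by
    have h₁ := abs_le.1 (hf a)
    have h₂ := abs_le.1 (p.abs_sum_toReal_mul_le hf)
    nlinarith
  have hsum : ∀ S : Fin n → α, ∑ i, (f (S i) - μ) = n * ((∑ i, f (S i)) / n - μ) := fun S => by
    rw [Finset.sum_sub_distrib, Finset.sum_const, Finset.card_univ, Fintype.card_fin,
      nsmul_eq_mul]
    field_simp
  calc ∑ S : Fin n → α with γ < |(∑ i, f (S i)) / n - μ|, ∏ i, (p (S i)).toReal
      ≤ ∑ S : Fin n → α with γ < |(∑ i, f (S i)) / n - μ|,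
          (∏ i, (p (S i)).toReal) * ((∑ i, (f (S i) - μ)) ^ 2 / (n * γ) ^ 2) := by
        refine Finset.sum_le_sum fun S hS => le_mul_of_one_le_right (hW S) ?_
        rw [one_le_div (by positivity), hsum, mul_pow, mul_pow]
        rw [← sq_abs ((∑ i, f (S i)) / n - μ)]
        gcongr
        exact (Finset.mem_filter.1 hS).2.le
    _ ≤ ∑ S : Fin n → α,
          (∏ i, (p (S i)).toReal) * ((∑ i, (f (S i) - μ)) ^ 2 / (n * γ) ^ 2) :=
        Finset.sum_le_sum_of_subset_of_nonneg (Finset.filter_subset _ _)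
          fun S _ _ => mul_nonneg (hW S) (by positivity)
    _ ≤ n * 4 / (n * γ) ^ 2 := by
        simp only [← mul_div_assoc, ← Finset.sum_div]
        gcongr
        exact p.sum_prod_mul_sq_sum_le hmean hc n
    _ = 4 / (n * γ ^ 2) := by field_simp

end PMF

theorem Finset.sum_filter_exists_le {ι β : Type*} (s : Finset ι) (t : Finset β) {w : β → ℝ}
    (hw : ∀ b, 0 ≤ w b) (P : ι → β → Prop) [∀ i, DecidablePred (P i)] :
    ∑ b ∈ t with ∃ i ∈ s, P i b, w b ≤ ∑ i ∈ s, ∑ b ∈ t with P i b, w b := by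
  calc ∑ b ∈ t with ∃ i ∈ s, P i b, w b ≤ ∑ b ∈ t, ∑ i ∈ s, if P i b then w b else 0 := by
        rw [Finset.sum_filter]
        refine Finset.sum_le_sum fun b _ => ?_
        split_ifs with hb
        · obtain ⟨i, hi, hPi⟩ := hb
          exact (Finset.single_le_sum (fun j _ => by split_ifs <;> simp [hw]) hi).trans'
            (by simp [hPi])
        · exact Finset.sum_nonneg fun j _ => by split_ifs <;> simp [hw]
    _ = ∑ i ∈ s, ∑ b ∈ t with P i b, w b := by
        rw [Finset.sum_comm]
        simp only [Finset.sum_filter]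

theorem Nat.floor_add_half_eq_or_eq {a b : ℝ} (hb : 0 ≤ b) (hab : |a - b| ≤ 1 / 4) :
    ⌊a + 1 / 2⌋₊ = ⌊b + 1 / 4⌋₊ ∨ ⌊a + 1 / 2⌋₊ = ⌊b + 3 / 4⌋₊ := by
  have hab' := abs_le.1 hab
  have h₁ : ⌊b + 1 / 4⌋₊ ≤ ⌊a + 1 / 2⌋₊ := Nat.floor_mono (by linarith)
  have h₂ : ⌊a + 1 / 2⌋₊ ≤ ⌊b + 3 / 4⌋₊ := Nat.floor_mono (by linarith)
  have h₃ : ⌊b + 3 / 4⌋₊ ≤ ⌊b + 1 / 4⌋₊ + 1 := by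
    rw [← Nat.floor_add_one (by positivity)]
    exact Nat.floor_mono (by linarith)
  omega

theorem Nat.floor_add_mem_Ioo {b c : ℝ} (hb : 0 ≤ b) (hc₀ : 0 ≤ c) (hc₁ : c < 1) :
    b - 1 < ⌊b + c⌋₊ ∧ (⌊b + c⌋₊ : ℝ) < b + 1 :=
  ⟨by linarith [Nat.lt_floor_add_one (b + c)], by linarith [Nat.floor_le (add_nonneg hb hc₀)]⟩

theorem le_of_continuous_of_forall_le_or_le {Y : Type*} [TopologicalSpace Y]
    [PreconnectedSpace Y] {F : Y → ℝ} (hF : Continuous F) {a b : ℝ} (hab : a < b)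
    (hgap : ∀ y, F y ≤ a ∨ b ≤ F y) {y₀ y₁ : Y} (h₀ : b ≤ F y₀) : b ≤ F y₁ := by
  by_contra! h₁
  have hmid : (a + b) / 2 ∈ Set.Icc (F y₁) (F y₀) := by
    rcases hgap y₁ with h | h <;> constructor <;> linarith
  obtain ⟨y, hy⟩ := intermediate_value_univ y₁ y₀ hF hmid
  rcases hgap y with h | h <;> linarith

namespace Replicability

namespace LdimGe

variable {X : Type*} {H H' : Set (X → Bool)} {d : ℕ}

theorem mono (h : LdimGe H d) (hHH' : H ⊆ H') : LdimGe H' d := by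
  obtain ⟨tree, htree⟩ := h
  exact ⟨tree, fun σ => (htree σ).imp fun h ⟨hH, hσ⟩ => ⟨hHH' hH, hσ⟩⟩

theorem zero (x : X) (hH : H.Nonempty) : LdimGe H 0 :=
  ⟨fun _ => x, fun _ => ⟨hH.some, hH.some_mem, fun j => j.elim0⟩⟩

theorem succ (x : X) (hpos : LdimGe {h ∈ H | h x = true} d)
    (hneg : LdimGe {h ∈ H | h x = false} d) : LdimGe H (d + 1) := by
  obtain ⟨T₁, hT₁⟩ := hpos
  obtain ⟨T₀, hT₀⟩ := hneg
  refine ⟨fun | [] => x | b :: s => cond b T₁ T₀ s, fun σ => ?_⟩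
  obtain ⟨h, ⟨hH, hx⟩, hh⟩ : ∃ h ∈ {h ∈ H | h x = σ 0}, ∀ j : Fin d,
      h (cond (σ 0) T₁ T₀ (List.ofFn fun i : Fin j => Fin.tail σ (Fin.castLE j.isLt.le i)))
        = Fin.tail σ j := by
    cases σ 0
    · exact hT₀ (Fin.tail σ)
    · exact hT₁ (Fin.tail σ)
  refine ⟨h, hH, Fin.cases ?_ fun j => ?_⟩
  · simpa using hx
  · simpa [List.ofFn_succ, Fin.tail] using hh j

/-- Distinct branches need distinct hypotheses: by induction on the depth, two branches
realized by the same hypothesis share their prefix, hence the queried point, hence the label. -/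
theorem two_pow_le_ncard (h : LdimGe H d) (hH : H.Finite) : 2 ^ d ≤ H.ncard := by
  obtain ⟨tree, htree⟩ := h
  choose f hfH hf using htree
  have hinj : Function.Injective fun σ => (⟨f σ, hfH σ⟩ : H) := by
    intro σ σ' hσσ'
    have hff : f σ = f σ' := congrArg Subtype.val hσσ'
    suffices ∀ m (hm : m < d), σ ⟨m, hm⟩ = σ' ⟨m, hm⟩ from funext fun j => this j j.2
    intro m
    induction m using Nat.strong_induction_on with
    | _ m ih =>
      intro hm
      have hprefix : (List.ofFn fun i : Fin m => σ (Fin.castLE hm.le i))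
          = List.ofFn fun i : Fin m => σ' (Fin.castLE hm.le i) :=
        congrArg List.ofFn (funext fun i => ih i i.2 _)
      rw [← hf σ ⟨m, hm⟩, ← hf σ' ⟨m, hm⟩]
      simp only [hprefix, hff]
  have := hH.to_subtype
  simpa [Nat.card_coe_set_eq] using Nat.card_le_card_of_injective _ hinj

end LdimGe

def threshold {m : ℕ} (i : ℕ) : Fin m → Bool := fun x => decide (i ≤ (x : ℕ))

theorem thresholdClass_eq_image (t : ℕ) : thresholdClass t = threshold '' Set.Iio t := by
  ext h
  constructor
  · rintro ⟨i, rfl⟩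
    exact ⟨i, i.2, rfl⟩
  · rintro ⟨i, hi, rfl⟩
    exact ⟨⟨i, hi⟩, rfl⟩

theorem threshold_mem_thresholdClass {t i : ℕ} (hi : i < t) : threshold i ∈ thresholdClass t :=
  ⟨⟨i, hi⟩, rfl⟩

/-- Binary search: querying the point `a + 2 ^ d - 1` splits the thresholds with index in
`[a, a + 2 ^ (d + 1))` into two halves of the same shape. -/
theorem ldimGe_threshold_image_Ico {t : ℕ} (ht : 2 ≤ t) :
    ∀ d a : ℕ, a + 2 ^ d ≤ t →
      LdimGe (threshold (m := t - 1) '' Set.Ico a (a + 2 ^ d)) d := by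
  intro d
  induction d with
  | zero =>
    intro a _
    exact LdimGe.zero ⟨0, by omega⟩ ⟨threshold a, a, by simp⟩
  | succ d ih =>
    intro a ha
    have h2d : 2 ^ (d + 1) = 2 ^ d + 2 ^ d := by ring
    have hpos := Nat.one_le_two_pow (n := d)
    let x : Fin (t - 1) := ⟨a + 2 ^ d - 1, by omega⟩
    refine LdimGe.succ x ((ih a (by omega)).mono ?_) ((ih (a + 2 ^ d) (by omega)).mono ?_)
    · rintro _ ⟨i, ⟨hai, hi⟩, rfl⟩
      exact ⟨⟨i, ⟨hai, by omega⟩, rfl⟩, by simp [threshold, x]; omega⟩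
    · rintro _ ⟨i, ⟨hai, hi⟩, rfl⟩
      exact ⟨⟨i, ⟨by omega, by omega⟩, rfl⟩, by simp [threshold, x]; omega⟩

theorem Ldim_thresholdClass (t : ℕ) : Ldim (thresholdClass t) = Nat.log 2 t := by
  have hfin : (thresholdClass t).Finite := by
    rw [thresholdClass_eq_image]
    exact (Set.finite_Iio t).image _
  apply le_antisymm
  · refine sSup_le ?_
    rintro _ ⟨k, rfl, hk⟩
    have hcard : (thresholdClass t).ncard ≤ t := by
      rw [thresholdClass_eq_image]
      exact (Set.ncard_image_le (Set.finite_Iio t)).trans (Set.ncard_Iio_nat t).le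
    exact_mod_cast Nat.le_log_of_pow_le one_lt_two ((hk.two_pow_le_ncard hfin).trans hcard)
  · rcases lt_or_ge t 2 with ht | ht
    · simp [Nat.log_of_lt ht]
    refine le_sSup ⟨_, rfl, ?_⟩
    rw [thresholdClass_eq_image]
    have hlog : 0 + 2 ^ Nat.log 2 t ≤ t := by
      simpa using Nat.pow_log_le_self 2 (by omega : t ≠ 0)
    exact (ldimGe_threshold_image_Ico ht _ 0 hlog).mono
      (Set.image_mono fun i hi => lt_of_lt_of_le hi.2 hlog)

section Probabilities

variable {X : Type*} {n : ℕ}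

theorem popLoss_pure (a : X × Bool) (h : X → Bool) :
    popLoss (PMF.pure a) h = if h a.1 = a.2 then 0 else 1 := by
  by_cases ha : h a.1 = a.2 <;> simp [popLoss, PMF.toOuterMeasure_pure_apply, ha]

theorem popLoss_pure_self (x : X) (h : X → Bool) : popLoss (PMF.pure (x, h x)) h = 0 := by
  simp [popLoss_pure]

theorem eq_of_popLoss_pure_lt_one {x : X} {y : Bool} {h : X → Bool}
    (hloss : popLoss (PMF.pure (x, y)) h < 1) : h x = y := by
  by_contra hxy
  simp [popLoss_pure, hxy] at hloss

theorem Realizable.of_popLoss_eq_zero {H : Set (X → Bool)} {D : PMF (X × Bool)} {h : X → Bool}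
    (hH : h ∈ H) (hD : popLoss D h = 0) : Realizable H D :=
  fun _ hε => ⟨h, hH, hD ▸ hε⟩

theorem outProb_mono (D : PMF (X × Bool)) (A : Sample X n → PMF (X → Bool))
    {E E' : Set (X → Bool)} (h : E ⊆ E') : outProb D A E ≤ outProb D A E' :=
  ENNReal.tsum_le_tsum fun S => by gcongr

theorem Realizable.exists_popLoss_eq_zero {H : Set (X → Bool)} {D : PMF (X × Bool)}
    (hD : Realizable H D) (hH : H.Finite) : ∃ h ∈ H, popLoss D h = 0 := by
  obtain ⟨h₀, hh₀, -⟩ := hD 1 one_pos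
  obtain ⟨h, hh, hmin⟩ := Set.exists_min_image H (popLoss D) hH ⟨h₀, hh₀⟩
  refine ⟨h, hh, by_contra fun hpos => ?_⟩
  obtain ⟨h', hh', hlt⟩ := hD _ (pos_iff_ne_zero.2 hpos)
  exact (hmin h' hh').not_gt hlt

theorem popLoss_ne_top (D : PMF (X × Bool)) (h : X → Bool) : popLoss D h ≠ ⊤ :=
  ne_top_of_le_ne_top ENNReal.one_ne_top (D.toOuterMeasure_le_one _)

variable [Fintype X]

theorem popLoss_toReal (D : PMF (X × Bool)) (h : X → Bool) :
    (popLoss D h).toReal = ∑ a with h a.1 ≠ a.2, (D a).toReal := by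
  rw [← ENNReal.toReal_sum fun a _ => D.apply_ne_top a, ← PMF.toOuterMeasure_apply_finset,
    popLoss]
  simp

theorem outProb_toReal (D : PMF (X × Bool)) (A : Sample X n → PMF (X → Bool))
    (E : Set (X → Bool)) :
    (outProb D A E).toReal
      = ∑ S : Sample X n, (∏ i, (D (S i)).toReal) * ((A S).toOuterMeasure E).toReal := by
  rw [outProb, tsum_fintype, ENNReal.toReal_sum fun S _ => ENNReal.mul_ne_top
    (ENNReal.prod_ne_top fun i _ => D.apply_ne_top _) (ne_top_of_le_ne_top ENNReal.one_ne_top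
      ((A S).toOuterMeasure_le_one E))]
  simp only [ENNReal.toReal_mul, ENNReal.toReal_prod]

theorem outProb_le_one (D : PMF (X × Bool)) (A : Sample X n → PMF (X → Bool))
    (E : Set (X → Bool)) : outProb D A E ≤ 1 := by
  rw [outProb, tsum_fintype, ← D.sum_prod_apply n]
  exact Finset.sum_le_sum fun S _ => mul_le_of_le_one_right' ((A S).toOuterMeasure_le_one E)

theorem outProb_toReal_compl (D : PMF (X × Bool)) (A : Sample X n → PMF (X → Bool))
    (E : Set (X → Bool)) : (outProb D A Eᶜ).toReal = 1 - (outProb D A E).toReal := by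
  have hcompl : ∀ S, ((A S).toOuterMeasure Eᶜ).toReal = 1 - ((A S).toOuterMeasure E).toReal :=
    fun S => by
      have h := congrArg ENNReal.toReal ((A S).toOuterMeasure_add_compl E)
      rw [ENNReal.toReal_add
        (ne_top_of_le_ne_top ENNReal.one_ne_top ((A S).toOuterMeasure_le_one _))
        (ne_top_of_le_ne_top ENNReal.one_ne_top ((A S).toOuterMeasure_le_one _)),
        ENNReal.toReal_one] at h
      linarith
  simp only [outProb_toReal, hcompl, mul_sub, mul_one, Finset.sum_sub_distrib,
    PMF.sum_prod_toReal]

theorem outProb_toReal_le_or_le {D : PMF (X × Bool)} {A : Sample X n → PMF (X → Bool)}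
    {h : X → Bool} (hprob : ENNReal.ofReal (1 - 1 / 3) ≤ outProb D A {h}) (T : Set (X → Bool)) :
    (h ∈ T → 2 / 3 ≤ (outProb D A T).toReal) ∧ (h ∉ T → (outProb D A T).toReal ≤ 1 / 3) := by
  have hle : ∀ {E}, h ∈ E → 2 / 3 ≤ (outProb D A E).toReal := fun hE => by
    have := (ENNReal.ofReal_le_iff_le_toReal (ne_top_of_le_ne_top ENNReal.one_ne_top
      (outProb_le_one D A _))).1 (hprob.trans (outProb_mono D A (Set.singleton_subset_iff.2 hE)))
    linarith
  refine ⟨hle, fun hT => ?_⟩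
  have := hle (E := Tᶜ) hT
  rw [outProb_toReal_compl] at this
  linarith

theorem ofReal_sub_le_outProb_pure (D : PMF (X × Bool))
    (g : Sample X n → X → Bool) {E : Set (X → Bool)} (bad : Sample X n → Prop)
    [DecidablePred bad] (hgood : ∀ S, ¬ bad S → g S ∈ E) {δ : ℝ}
    (hbad : ∑ S with bad S, ∏ i, (D (S i)).toReal ≤ δ) :
    ENNReal.ofReal (1 - δ) ≤ outProb D (fun S => PMF.pure (g S)) E := by
  rw [ENNReal.ofReal_le_iff_le_toReal (ne_top_of_le_ne_top ENNReal.one_ne_top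
    (outProb_le_one D _ E)), outProb_toReal]
  have htotal := Finset.sum_filter_add_sum_filter_not Finset.univ bad
    fun S : Sample X n => ∏ i, (D (S i)).toReal
  rw [D.sum_prod_toReal] at htotal
  calc 1 - δ ≤ ∑ S with ¬ bad S, ∏ i, (D (S i)).toReal := by linarith
    _ ≤ _ := by
      rw [Finset.sum_filter]
      refine Finset.sum_le_sum fun S _ => ?_
      split_ifs with hS
      · exact mul_nonneg (Finset.prod_nonneg fun _ _ => ENNReal.toReal_nonneg)
          ENNReal.toReal_nonneg
      · simp [PMF.toOuterMeasure_pure_apply, hgood S hS]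

theorem popLoss_mix_eq_zero {P Q : PMF (X × Bool)} {h : X → Bool} (hP : popLoss P h = 0)
    (hQ : popLoss Q h = 0) (u : unitInterval) : popLoss (P.mix Q u) h = 0 := by
  rw [popLoss, PMF.toOuterMeasure_apply_eq_zero_iff] at *
  exact Disjoint.mono_left (PMF.support_mix_subset P Q u) (Disjoint.union_left hP hQ)

theorem continuous_outProb_mix (P Q : PMF (X × Bool)) (A : Sample X n → PMF (X → Bool))
    (E : Set (X → Bool)) : Continuous fun u => (outProb (P.mix Q u) A E).toReal := by
  simp only [outProb_toReal, PMF.mix_apply_toReal]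
  fun_prop

end Probabilities

section LowerBound

variable {X : Type*} {H : Set (X → Bool)} {h₁ h₂ : X → Bool} {x₁ x₂ : X}

theorem not_isListLearner_zero (hh₁ : h₁ ∈ H) (x : X) (A : LearningRule X) (ε : ℝ) :
    ¬ IsListLearner H A ε 0 := by
  intro hA
  obtain ⟨n, hn⟩ := hA (1 / 2) (by norm_num)
  obtain ⟨hs, -, hprob⟩ := hn _ (.of_popLoss_eq_zero hh₁ (popLoss_pure_self x h₁))
  have hempty : outProb (PMF.pure (x, h₁ x)) (A n) (Set.range hs) = 0 := by
    simp [Set.range_eq_empty, outProb]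
  rw [hempty, nonpos_iff_eq_zero, ENNReal.ofReal_eq_zero] at hprob
  norm_num at hprob

variable [Fintype X]

theorem not_isListLearner_one (hh₁ : h₁ ∈ H) (hh₂ : h₂ ∈ H) (hx₁ : h₁ x₁ ≠ h₂ x₁)
    (hx₂ : h₁ x₂ = h₂ x₂) {ε : ℝ} (hε : ε < 1) (A : LearningRule X) :
    ¬ IsListLearner H A ε 1 := by
  intro hA
  obtain ⟨n, hn⟩ := hA (1 / 3) (by norm_num)
  let F : PMF (X × Bool) → ℝ := fun D => (outProb D (A n) {h | h x₁ = h₁ x₁}).toReal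
  have hlisted : ∀ D, Realizable H D → ∃ h, popLoss D h < 1 ∧
      (h x₁ = h₁ x₁ → 2 / 3 ≤ F D) ∧ (h x₁ ≠ h₁ x₁ → F D ≤ 1 / 3) := by
    intro D hD
    obtain ⟨hs, hloss, hprob⟩ := hn D hD
    rw [Set.range_unique] at hprob
    exact ⟨hs default, (hloss _).trans_lt (ENNReal.ofReal_lt_one.2 hε),
      outProb_toReal_le_or_le hprob {h | h x₁ = h₁ x₁}⟩
  have hgap : ∀ D, Realizable H D → F D ≤ 1 / 3 ∨ 2 / 3 ≤ F D := fun D hD => by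
    obtain ⟨h, -, hT, hTc⟩ := hlisted D hD
    by_cases hx : h x₁ = h₁ x₁
    exacts [Or.inr (hT hx), Or.inl (hTc hx)]
  have hpath : ∀ {P Q : PMF (X × Bool)} {h}, h ∈ H → popLoss P h = 0 → popLoss Q h = 0 →
      2 / 3 ≤ F P → 2 / 3 ≤ F Q := fun hH hP hQ hFP => by
    simpa using le_of_continuous_of_forall_le_or_le (continuous_outProb_mix _ _ (A n) _)
      (by norm_num) (fun u => hgap _ (.of_popLoss_eq_zero hH (popLoss_mix_eq_zero hP hQ u)))
      (y₀ := 0) (y₁ := 1) (by simpa using hFP)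
  have hstart : 2 / 3 ≤ F (PMF.pure (x₁, h₁ x₁)) := by
    obtain ⟨h, hloss, hT, -⟩ := hlisted _ (.of_popLoss_eq_zero hh₁ (popLoss_pure_self x₁ _))
    exact hT (eq_of_popLoss_pure_lt_one hloss)
  have hend : F (PMF.pure (x₁, h₂ x₁)) ≤ 1 / 3 := by
    obtain ⟨h, hloss, -, hTc⟩ := hlisted _ (.of_popLoss_eq_zero hh₂ (popLoss_pure_self x₁ _))
    exact hTc (eq_of_popLoss_pure_lt_one hloss ▸ hx₁.symm)
  have hmid := hpath hh₁ (popLoss_pure_self x₁ h₁) (popLoss_pure_self x₂ h₁) hstart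
  have := hpath hh₂ (by rw [hx₂]; exact popLoss_pure_self x₂ h₂) (popLoss_pure_self x₁ h₂) hmid
  linarith

theorem two_le_listNumber (hh₁ : h₁ ∈ H) (hh₂ : h₂ ∈ H) (hx₁ : h₁ x₁ ≠ h₂ x₁)
    (hx₂ : h₁ x₂ = h₂ x₂) : 2 ≤ listNumber H := by
  refine le_sInf ?_
  rintro _ ⟨l, rfl, hl⟩
  obtain ⟨A, hA⟩ := hl (1 / 2) (by norm_num)
  rcases l with _ | _ | l
  · exact absurd hA (not_isListLearner_zero hh₁ x₁ A _)
  · exact absurd hA (not_isListLearner_one hh₁ hh₂ hx₁ hx₂ (by norm_num) A)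
  · exact_mod_cast Nat.le_add_left 2 l

end LowerBound

section ThresholdStatistics

variable {m : ℕ} (D : PMF (Fin m × Bool))

noncomputable def posBelow (j : ℕ) : ℝ := ∑ a with a.2 = true ∧ a.1.val < j, (D a).toReal

noncomputable def negAbove (j : ℕ) : ℝ := ∑ a with a.2 = false ∧ j ≤ a.1.val, (D a).toReal

noncomputable def margin (j : ℕ) : ℝ := posBelow D j - negAbove D j

theorem popLoss_threshold_toReal (j : ℕ) :
    (popLoss D (threshold j)).toReal = posBelow D j + negAbove D j := by
  rw [popLoss_toReal, posBelow, negAbove, Finset.sum_filter, Finset.sum_filter,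
    Finset.sum_filter, ← Finset.sum_add_distrib]
  refine Finset.sum_congr rfl fun ⟨x, y⟩ _ => ?_
  by_cases hjx : j ≤ x.val <;> cases y <;> simp [threshold, hjx]

theorem posBelow_nonneg (j : ℕ) : 0 ≤ posBelow D j :=
  Finset.sum_nonneg fun _ _ => ENNReal.toReal_nonneg

theorem negAbove_nonneg (j : ℕ) : 0 ≤ negAbove D j :=
  Finset.sum_nonneg fun _ _ => ENNReal.toReal_nonneg

theorem posBelow_mono : Monotone (posBelow D) := fun _ _ hjk =>
  Finset.sum_le_sum_of_subset_of_nonneg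
    (Finset.monotone_filter_right _ fun _ _ ha => ⟨ha.1, ha.2.trans_le hjk⟩)
    fun _ _ _ => ENNReal.toReal_nonneg

theorem negAbove_anti : Antitone (negAbove D) := fun _ _ hjk =>
  Finset.sum_le_sum_of_subset_of_nonneg
    (Finset.monotone_filter_right _ fun _ _ ha => ⟨ha.1, hjk.trans ha.2⟩)
    fun _ _ _ => ENNReal.toReal_nonneg

theorem margin_mono : Monotone (margin D) := fun _ _ hjk =>
  sub_le_sub (posBelow_mono D hjk) (negAbove_anti D hjk)

variable {D} {i : ℕ} (hpos : posBelow D i = 0) (hneg : negAbove D i = 0)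
include hpos hneg

theorem margin_eq_zero_of_perfect : margin D i = 0 := by
  rw [margin, hpos, hneg, sub_self]

/-- Once `threshold i` is perfect, each other threshold errs on one side of `i` only. -/
theorem popLoss_threshold_toReal_eq_abs_margin (j : ℕ) :
    (popLoss D (threshold j)).toReal = |margin D j| := by
  rw [popLoss_threshold_toReal, margin]
  rcases le_total j i with hji | hij
  · have : posBelow D j = 0 := le_antisymm (hpos ▸ posBelow_mono D hji) (posBelow_nonneg D j)
    rw [this, zero_sub, abs_neg, abs_of_nonneg (negAbove_nonneg D j), zero_add]
  · have : negAbove D j = 0 := le_antisymm (hneg ▸ negAbove_anti D hij) (negAbove_nonneg D j)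
    rw [this, sub_zero, abs_of_nonneg (posBelow_nonneg D j), add_zero]

end ThresholdStatistics

theorem exists_perfect_threshold {t : ℕ} {D : PMF (Fin (t - 1) × Bool)}
    (hD : Realizable (thresholdClass t) D) : ∃ i < t, posBelow D i = 0 ∧ negAbove D i = 0 := by
  rw [thresholdClass_eq_image] at hD
  obtain ⟨_, ⟨i, hi, rfl⟩, hloss⟩ := hD.exists_popLoss_eq_zero ((Set.finite_Iio t).image _)
  have := popLoss_threshold_toReal D i
  rw [hloss, ENNReal.toReal_zero] at this
  exact ⟨i, hi, by linarith [posBelow_nonneg D i, negAbove_nonneg D i],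
    by linarith [posBelow_nonneg D i, negAbove_nonneg D i]⟩

section Score

noncomputable def ramp (ε u : ℝ) : ℝ := max 0 (min 1 (u / ε))

variable {ε : ℝ}

theorem ramp_nonneg (u : ℝ) : 0 ≤ ramp ε u := le_max_left _ _

theorem ramp_le_one (u : ℝ) : ramp ε u ≤ 1 := max_le zero_le_one (min_le_left _ _)

theorem ramp_of_nonpos (hε : 0 < ε) {u : ℝ} (hu : u ≤ 0) : ramp ε u = 0 :=
  max_eq_left (min_le_of_right_le (div_nonpos_of_nonpos_of_nonneg hu hε.le))

theorem ramp_of_le (hε : 0 < ε) {u : ℝ} (hu : ε ≤ u) : ramp ε u = 1 := by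
  rw [ramp, min_eq_left ((one_le_div hε).2 hu), max_eq_right zero_le_one]

theorem ramp_mono (hε : 0 < ε) : Monotone (ramp ε) := fun _ _ huv =>
  max_le_max_left _ (min_le_min_left _ (div_le_div_of_nonneg_right huv hε.le))

theorem abs_ramp_sub_ramp_le (hε : 0 < ε) (u v : ℝ) : |ramp ε u - ramp ε v| ≤ |u - v| / ε :=
  calc |ramp ε u - ramp ε v| ≤ |min 1 (u / ε) - min 1 (v / ε)| := by
        rw [ramp, ramp]; simpa using abs_max_sub_max_le_max 0 (min 1 (u / ε)) 0 (min 1 (v / ε))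
    _ ≤ |u / ε - v / ε| := by simpa using abs_min_sub_min_le_max 1 (u / ε) 1 (v / ε)
    _ = |u - v| / ε := by rw [← sub_div, abs_div, abs_of_pos hε]

noncomputable def score (ε : ℝ) (t : ℕ) (G : ℕ → ℝ) : ℝ := ∑ j ∈ Finset.range t, ramp ε (G j)

theorem score_nonneg (t : ℕ) (G : ℕ → ℝ) : 0 ≤ score ε t G :=
  Finset.sum_nonneg fun _ _ => ramp_nonneg _

theorem abs_score_sub_score_le (hε : 0 < ε) {t : ℕ} {G G' : ℕ → ℝ} {γ : ℝ}
    (hGG' : ∀ j < t, |G j - G' j| ≤ γ) : |score ε t G - score ε t G'| ≤ t * (γ / ε) := by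
  rw [score, score, ← Finset.sum_sub_distrib]
  refine (Finset.abs_sum_le_sum_abs _ _).trans ?_
  refine (Finset.sum_le_sum fun j hj => (abs_ramp_sub_ramp_le hε _ _).trans
    (div_le_div_of_nonneg_right (hGG' j (Finset.mem_range.1 hj)) hε.le)).trans ?_
  simp

theorem sub_le_sum_range_of_one_le {f : ℕ → ℝ} (hf : Monotone f) (hf0 : ∀ l, 0 ≤ f l) {j t : ℕ}
    (hj : 1 ≤ f j) (hjt : j ≤ t) : (t : ℝ) - j ≤ ∑ l ∈ Finset.range t, f l := by
  rw [← Finset.sum_range_add_sum_Ico _ hjt]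
  have := Finset.card_nsmul_le_sum (Finset.Ico j t) f 1 fun l hl =>
    hj.trans (hf (Finset.mem_Ico.1 hl).1)
  rw [Nat.card_Ico, nsmul_one, Nat.cast_sub hjt] at this
  linarith [Finset.sum_nonneg fun l (_ : l ∈ Finset.range j) => hf0 l]

theorem sum_range_le_sub_of_nonpos {f : ℕ → ℝ} (hf : Monotone f) (hf1 : ∀ l, f l ≤ 1) {j t : ℕ}
    (hj : f j ≤ 0) (hjt : j < t) : ∑ l ∈ Finset.range t, f l ≤ t - (j + 1) := by
  rw [← Finset.sum_range_add_sum_Ico _ hjt]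
  have h₁ : ∑ l ∈ Finset.range (j + 1), f l ≤ 0 :=
    Finset.sum_nonpos fun l hl => (hf (Nat.lt_succ_iff.1 (Finset.mem_range.1 hl))).trans hj
  have h₂ := Finset.sum_le_card_nsmul (Finset.Ico (j + 1) t) f 1 fun l _ => hf1 l
  rw [Nat.card_Ico, nsmul_one, Nat.cast_sub hjt] at h₂
  push_cast at h₂
  linarith

variable {G : ℕ → ℝ} (hε : 0 < ε) (hG : Monotone G) {i t : ℕ} (hi : i < t) (hGi : G i = 0)
include hε hG hi hGi

theorem score_le_sub_one : score ε t G ≤ t - 1 := by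
  simpa [score] using sum_range_le_sub_of_nonpos ((ramp_mono hε).comp hG) (fun _ => ramp_le_one _)
    (ramp_of_nonpos hε (hGi ▸ hG (Nat.zero_le i))).le (hi.trans_le' (Nat.zero_le i))

/-- If `G (t - 1 - q) > ε`, the ramps from there on are all `1` and `score ≥ q + 1`; if
`G (t - 1 - q) < -ε`, the ramps up to the next index are all `0` and `score ≤ q - 1`. -/
theorem abs_le_of_score {q : ℕ} (hql : score ε t G - 1 < q) (hqu : q < score ε t G + 1) :
    |G (t - 1 - q)| ≤ ε := by
  have hqt : q < t := by
    have : (q : ℝ) < t := by linarith [score_le_sub_one hε hG hi hGi]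
    exact_mod_cast this
  set j := t - 1 - q with hj
  have hjq : (j : ℝ) + q + 1 = t := by norm_cast; omega
  simp only [score] at hql hqu
  rw [abs_le]
  constructor
  · by_contra! hlt
    have hji : j + 1 ≤ i := by
      by_contra! hij
      linarith [hG (show i ≤ j by omega)]
    have := sum_range_le_sub_of_nonpos (f := fun l => ramp ε (G l)) ((ramp_mono hε).comp hG)
      (fun _ => ramp_le_one _) (ramp_of_nonpos hε (hGi ▸ hG hji)).le (by omega : j + 1 < t)
    push_cast at this
    linarith
  · by_contra! hlt
    have := sub_le_sum_range_of_one_le (f := fun l => ramp ε (G l)) ((ramp_mono hε).comp hG)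
      (fun _ => ramp_nonneg _) (ramp_of_le hε hlt.le).ge (by omega : j ≤ t)
    linarith

end Score

section UpperBound

variable {m n : ℕ}

noncomputable def marginTerm (j : ℕ) (a : Fin m × Bool) : ℝ :=
  (if a.2 = true ∧ a.1.val < j then 1 else 0) - (if a.2 = false ∧ j ≤ a.1.val then 1 else 0)

theorem abs_marginTerm_le_one (j : ℕ) (a : Fin m × Bool) : |marginTerm j a| ≤ 1 := by
  rcases a with ⟨x, _ | _⟩ <;> simp only [marginTerm] <;> split_ifs <;> norm_num

theorem margin_eq_sum (D : PMF (Fin m × Bool)) (j : ℕ) :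
    margin D j = ∑ a, (D a).toReal * marginTerm j a := by
  simp only [margin, posBelow, negAbove, marginTerm, Finset.sum_filter, mul_sub, mul_ite,
    mul_one, mul_zero, Finset.sum_sub_distrib]

noncomputable def empMargin (S : Sample (Fin m) n) (j : ℕ) : ℝ := (∑ i, marginTerm j (S i)) / n

theorem sum_prod_filter_exists_lt_abs_empMargin_sub_le (D : PMF (Fin m × Bool)) (t : ℕ)
    (hn : 0 < n) {γ : ℝ} (hγ : 0 < γ) :
    ∑ S : Sample (Fin m) n with ∃ j ∈ Finset.range t, γ < |empMargin S j - margin D j|,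
      ∏ i, (D (S i)).toReal ≤ t * (4 / (n * γ ^ 2)) :=
  calc _ ≤ ∑ j ∈ Finset.range t, ∑ S : Sample (Fin m) n with γ < |empMargin S j - margin D j|,
          ∏ i, (D (S i)).toReal :=
        Finset.sum_filter_exists_le _ _ (fun S => Finset.prod_nonneg fun _ _ =>
          ENNReal.toReal_nonneg) _
    _ ≤ ∑ j ∈ Finset.range t, 4 / (n * γ ^ 2) := Finset.sum_le_sum fun j _ => by
        simpa only [empMargin, margin_eq_sum] using
          D.sum_prod_filter_lt_abs_sub_le (abs_marginTerm_le_one j) hn hγ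
    _ = t * (4 / (n * γ ^ 2)) := by rw [Finset.sum_const, Finset.card_range, nsmul_eq_mul]

noncomputable def thresholdLearner (ε : ℝ) (t : ℕ) : LearningRule (Fin (t - 1)) :=
  fun _ S => PMF.pure (threshold (t - 1 - ⌊score ε t (empMargin S) + 1 / 2⌋₊))

theorem thresholdLearner_isListLearner (t : ℕ) {ε : ℝ} (hε : 0 < ε) :
    IsListLearner (thresholdClass t) (thresholdLearner ε t) ε 2 := by
  intro δ hδ
  set γ := ε / (4 * (t + 1))
  have hγ : 0 < γ := by positivity
  obtain ⟨n, hn⟩ := exists_nat_gt (4 * t / (γ ^ 2 * δ))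
  have hn₀ : 0 < n := by
    have : (0 : ℝ) < n := hn.trans_le' (by positivity)
    exact_mod_cast this
  refine ⟨n, fun D hD => ?_⟩
  obtain ⟨i, hi, hpos, hneg⟩ := exists_perfect_threshold hD
  set v := score ε t (margin D)
  have hv : 0 ≤ v := score_nonneg t _
  have hgood : ∀ q : ℕ, v - 1 < q ∧ q < v + 1 →
      popLoss D (threshold (t - 1 - q)) ≤ ENNReal.ofReal ε := fun q hq => by
    rw [ENNReal.le_ofReal_iff_toReal_le (popLoss_ne_top _ _) hε.le,
      popLoss_threshold_toReal_eq_abs_margin hpos hneg]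
    exact abs_le_of_score hε (margin_mono D) hi (margin_eq_zero_of_perfect hpos hneg) hq.1 hq.2
  refine ⟨![threshold (t - 1 - ⌊v + 1 / 4⌋₊), threshold (t - 1 - ⌊v + 3 / 4⌋₊)],
    fun ℓ => ?_, ?_⟩
  · fin_cases ℓ
    exacts [hgood _ (Nat.floor_add_mem_Ioo hv (by norm_num) (by norm_num)),
      hgood _ (Nat.floor_add_mem_Ioo hv (by norm_num) (by norm_num))]
  refine ofReal_sub_le_outProb_pure D _
    (fun S => ∃ j ∈ Finset.range t, γ < |empMargin S j - margin D j|) (fun S hS => ?_) ?_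
  · push Not at hS
    have htγ : t * (γ / ε) ≤ 1 / 4 := by
      rw [show t * (γ / ε) = t / (4 * (t + 1)) by simp only [γ]; field_simp,
        div_le_iff₀ (by positivity)]
      linarith
    have hclose : |score ε t (empMargin S) - v| ≤ 1 / 4 :=
      (abs_score_sub_score_le hε fun j hj => hS j (Finset.mem_range.2 hj)).trans htγ
    rcases Nat.floor_add_half_eq_or_eq hv hclose with h | h
    exacts [⟨0, by rw [h]; rfl⟩, ⟨1, by rw [h]; rfl⟩]
  refine (sum_prod_filter_exists_lt_abs_empMargin_sub_le D t hn₀ hγ).trans ?_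
  rw [div_lt_iff₀ (by positivity)] at hn
  rw [mul_div_assoc', div_le_iff₀ (by positivity)]
  linarith

end UpperBound

theorem listNumber_thresholdClass {t : ℕ} (ht : 3 ≤ t) : listNumber (thresholdClass t) = 2 := by
  refine le_antisymm (sInf_le ⟨2, rfl, fun ε hε => ⟨_, thresholdLearner_isListLearner t hε⟩⟩) ?_
  exact two_le_listNumber (threshold_mem_thresholdClass (by omega : 0 < t))
    (threshold_mem_thresholdClass (by omega : 1 < t)) (x₁ := ⟨0, by omega⟩) (x₂ := ⟨1, by omega⟩)
    (by simp [threshold]) (by simp [threshold])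

/-- for every `d ≥ 2`, the (finite) class of thresholds over `2^d` points
has Littlestone dimension `d` and list replicability number `2`. -/
theorem stmt_5 (d : ℕ) (hd : 2 ≤ d) :
    Ldim (thresholdClass (2 ^ d)) = (d : ℕ∞) ∧
    listNumber (thresholdClass (2 ^ d)) = 2 := by
  refine ⟨by rw [Ldim_thresholdClass, Nat.log_pow one_lt_two], listNumber_thresholdClass ?_⟩
  calc 3 ≤ 2 ^ 2 := by norm_num
    _ ≤ 2 ^ d := Nat.pow_le_pow_right two_pos hd

end Replicability
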